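/- arXiv:1810.10975 — 5 statements merged into one kernel-verified Lean document; each statement's English description precedes it below -/
import Mathlib

section
/- For all real numbers A > 1 and B > 0, the series ∑_{k=1}^∞ A^k e^{-B·2^k} converges and satisfies ∑_{k=1}^∞ A^k e^{-B·2^k} ≤ (2·ln A / (B·e·ln 2))^{ln A / ln 2} · (1/B). -/
/-!
With `c = log₂ A` we have `A ^ n = (2 ^ n) ^ c`, and the elementary bound `x ^ c ≤ (c / e) ^ c · eˣ`
(from `y ≤ e ^ (y - 1)` at `y = x / c`) applied to `x = B 2ⁿ / 2` gives
`Aⁿ e^{-B 2ⁿ} ≤ K e^{-B 2ⁿ / 2} ≤ K e^{-B n}` with `K = (2c / (B e)) ^ c`, using `2n ≤ 2ⁿ`.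
Summing the geometric series, the sum is at most `K / (e ^ B - 1) ≤ K / B`.
-/

open Real

theorem Real.rpow_le_div_exp_one_rpow_mul_exp {x c : ℝ} (hx : 0 ≤ x) (hc : 0 ≤ c) :
    x ^ c ≤ (c / exp 1) ^ c * exp x := by
  rcases hc.eq_or_lt with rfl | hc
  · simpa using one_le_exp hx
  have hxc : x / c ≤ exp (x / c - 1) := by linarith [add_one_le_exp (x / c - 1)]
  calc x ^ c = c ^ c * (x / c) ^ c := by
        rw [← mul_rpow hc.le (by positivity), mul_div_cancel₀ x hc.ne']
    _ ≤ c ^ c * exp (x / c - 1) ^ c := by gcongr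
    _ = (c / exp 1) ^ c * exp x := by
        rw [← exp_mul, div_rpow hc.le (exp_pos 1).le, ← exp_mul, sub_mul,
          div_mul_cancel₀ x hc.ne', exp_sub]
        field_simp

theorem Nat.two_mul_le_two_pow (n : ℕ) : 2 * n ≤ 2 ^ n := by
  cases n with
  | zero => simp
  | succ m => have := Nat.lt_two_pow_self (n := m); rw [pow_succ]; omega

theorem pow_mul_exp_neg_mul_two_pow_le {A B : ℝ} (hA : 1 ≤ A) (hB : 0 < B) (n : ℕ) :
    A ^ n * exp (-B * 2 ^ n) ≤ (2 * logb 2 A / (B * exp 1)) ^ logb 2 A * exp (-B) ^ n := by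
  set c := logb 2 A
  have hc : 0 ≤ c := logb_nonneg one_lt_two hA
  have hA_pow : A ^ n = ((2 : ℝ) ^ n) ^ c := by
    rw [← rpow_pow_comm zero_le_two, rpow_logb two_pos (by norm_num) (by linarith)]
  have hpeak := rpow_le_div_exp_one_rpow_mul_exp (x := B / 2 * 2 ^ n) (by positivity) hc
  rw [mul_rpow (by positivity) (by positivity)] at hpeak
  have h2n : (2 * n : ℝ) ≤ 2 ^ n := by exact_mod_cast Nat.two_mul_le_two_pow n
  calc A ^ n * exp (-B * 2 ^ n)
      ≤ (2 * c / (B * exp 1)) ^ c * exp (B / 2 * 2 ^ n) * exp (-B * 2 ^ n) := by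
        rw [hA_pow]
        gcongr
        rw [show 2 * c / (B * exp 1) = c / exp 1 / (B / 2) by field_simp,
          div_rpow (by positivity) (by positivity), div_mul_eq_mul_div,
          le_div_iff₀ (by positivity), mul_comm]
        exact hpeak
    _ = (2 * c / (B * exp 1)) ^ c * exp (-(B / 2 * 2 ^ n)) := by
        rw [mul_assoc, ← exp_add]
        ring_nf
    _ ≤ (2 * c / (B * exp 1)) ^ c * exp (-B) ^ n := by
        rw [← exp_nat_mul]
        gcongr
        nlinarith

theorem hasSum_exp_neg_pow_succ {B : ℝ} (hB : 0 < B) :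
    HasSum (fun k : ℕ => exp (-B) ^ (k + 1)) (exp B - 1)⁻¹ := by
  have hr : exp (-B) < 1 := exp_lt_one_iff.2 (by linarith)
  have h1 : 1 < exp B := one_lt_exp_iff.2 hB
  have hsum := (hasSum_geometric_of_lt_one (exp_pos _).le hr).mul_left (exp (-B))
  simp only [← pow_succ'] at hsum
  have hval : exp (-B) * (1 - exp (-B))⁻¹ = (exp B - 1)⁻¹ := by
    rw [exp_neg]
    field_simp
  rwa [hval] at hsum

theorem stmt_0 (A B : ℝ) (hA : 1 < A) (hB : 0 < B) :
    Summable (fun k : ℕ => A ^ (k + 1) * Real.exp (-B * 2 ^ (k + 1))) ∧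
    (∑' k : ℕ, A ^ (k + 1) * Real.exp (-B * 2 ^ (k + 1))) ≤
      (2 * Real.log A / (B * Real.exp 1 * Real.log 2)) ^ (Real.log A / Real.log 2)
        * (1 / B) := by
  set K := (2 * Real.log A / (B * Real.exp 1 * Real.log 2)) ^ (Real.log A / Real.log 2)
  have hK : (2 * logb 2 A / (B * exp 1)) ^ logb 2 A = K := by
    simp only [K, logb]
    ring_nf
  have hterm (k : ℕ) : A ^ (k + 1) * exp (-B * 2 ^ (k + 1)) ≤ K * exp (-B) ^ (k + 1) :=
    hK ▸ pow_mul_exp_neg_mul_two_pow_le hA.le hB (k + 1)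
  have hgeom := (hasSum_exp_neg_pow_succ hB).mul_left K
  have hsum : Summable (fun k : ℕ => A ^ (k + 1) * exp (-B * 2 ^ (k + 1))) :=
    hgeom.summable.of_nonneg_of_le (fun k => by positivity) hterm
  refine ⟨hsum, ?_⟩
  calc ∑' k : ℕ, A ^ (k + 1) * exp (-B * 2 ^ (k + 1))
      ≤ K * (exp B - 1)⁻¹ := hgeom.tsum_eq ▸ hsum.tsum_le_tsum hterm hgeom.summable
    _ ≤ K * (1 / B) := by
        have hK0 : 0 ≤ K := rpow_nonneg (by have := log_pos hA; positivity) _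
        rw [one_div]
        gcongr
        linarith [add_one_le_exp B]
end

section
/- Let β < 0 and Θ > 0, and set C_Θ = 2^Θ·(−β)^{Θ+1}·((2+Θ)/Θ). Then for all μ > 0 and t > 0, (1 + μ²)^{−β} · e^{−μt} ≤ exp(C_Θ/t^Θ − β). -/
/-! With `b = -β > 0` and `a = 2b/t`, the function `μ ↦ (1 + μ²)^b e^{-μt}` is bounded by
`(1 + a²)^b`: below `a` the first factor is at most `(1 + a²)^b`, and above `a` the estimate
`log (1 + μ²) ≤ log (1 + a²) + 2 (μ/a - 1)` lets the exponential absorb its growth.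
Then `log (1 + a²) ≤ 2 a^Θ / Θ + 1` turns `(1 + a²)^b` into the stated bound. -/

open Real

namespace Real

lemma log_one_add_sq_le_two_mul_rpow_div_add_one {a Θ : ℝ} (ha : 0 ≤ a) (hΘ : 0 < Θ) :
    log (1 + a ^ 2) ≤ 2 * a ^ Θ / Θ + 1 := by
  have hlog_two : log 2 ≤ 1 := by
    linarith [log_le_sub_one_of_pos (zero_lt_two : (0 : ℝ) < 2)]
  have hrpow : 0 ≤ 2 * a ^ Θ / Θ := by positivity
  rcases le_or_gt a 1 with h | h
  · calc log (1 + a ^ 2) ≤ log 2 := log_le_log (by positivity) (by nlinarith)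
      _ ≤ 2 * a ^ Θ / Θ + 1 := by linarith
  · calc log (1 + a ^ 2) ≤ log (2 * a ^ 2) := log_le_log (by positivity) (by nlinarith)
      _ = log 2 + 2 * log a := by rw [log_mul two_ne_zero (by positivity), log_pow]; norm_num
      _ ≤ 1 + 2 * (a ^ Θ / Θ) := by gcongr; exact log_le_rpow_div ha hΘ
      _ = 2 * a ^ Θ / Θ + 1 := by ring

lemma log_one_add_sq_le_add_two_mul_div_sub_one {a μ : ℝ} (ha : 0 < a) (haμ : a ≤ μ) :
    log (1 + μ ^ 2) ≤ log (1 + a ^ 2) + 2 * (μ / a - 1) := by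
  have hq : 1 ≤ μ / a := (one_le_div ha).mpr haμ
  have hμ : μ = a * (μ / a) := (mul_div_cancel₀ μ ha.ne').symm
  have hle : 1 + μ ^ 2 ≤ (1 + a ^ 2) * (μ / a) ^ 2 := by
    rw [hμ, mul_div_cancel_left₀ _ ha.ne']; nlinarith
  calc log (1 + μ ^ 2) ≤ log ((1 + a ^ 2) * (μ / a) ^ 2) := log_le_log (by positivity) hle
    _ = log (1 + a ^ 2) + 2 * log (μ / a) := by
        rw [log_mul (by positivity) (by positivity), log_pow]; norm_num
    _ ≤ log (1 + a ^ 2) + 2 * (μ / a - 1) := by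
        gcongr; exact log_le_sub_one_of_pos (by positivity)

lemma one_add_sq_rpow_mul_exp_neg_mul_le {b μ t : ℝ} (hb : 0 < b) (hμ : 0 ≤ μ) (ht : 0 < t) :
    (1 + μ ^ 2) ^ b * exp (-μ * t) ≤ (1 + (2 * b / t) ^ 2) ^ b := by
  set a := 2 * b / t with ha_def
  have ha : 0 < a := by positivity
  rw [rpow_def_of_pos (by positivity), rpow_def_of_pos (by positivity), ← exp_add, exp_le_exp]
  rcases le_or_gt μ a with h | h
  · have : log (1 + μ ^ 2) ≤ log (1 + a ^ 2) := log_le_log (by positivity) (by nlinarith)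
    nlinarith
  · have hlog := log_one_add_sq_le_add_two_mul_div_sub_one ha h.le
    have hμt : 2 * b * (μ / a) = μ * t := by
      rw [ha_def]; field_simp
    nlinarith

end Real

theorem stmt_3 (β Θ : ℝ) (hβ : β < 0) (hΘ : 0 < Θ) (mu t : ℝ) (hmu : 0 < mu) (ht : 0 < t) :
    (1 + mu ^ 2) ^ (-β) * Real.exp (-mu * t) ≤
      Real.exp ((2 : ℝ) ^ Θ * (-β) ^ (Θ + 1) * ((2 + Θ) / Θ) / t ^ Θ - β) := by
  have hb : 0 < -β := neg_pos.mpr hβ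
  set a := 2 * -β / t with ha
  have hlog : log (1 + a ^ 2) ≤ (2 + Θ) / Θ * a ^ Θ + 1 := by
    have : 2 * a ^ Θ / Θ ≤ (2 + Θ) / Θ * a ^ Θ := by
      rw [div_mul_eq_mul_div]; gcongr; linarith
    linarith [log_one_add_sq_le_two_mul_rpow_div_add_one (by positivity : 0 ≤ a) hΘ]
  have haΘ : a ^ Θ * -β = 2 ^ Θ * (-β) ^ (Θ + 1) / t ^ Θ := by
    rw [ha, div_rpow (by positivity) ht.le, mul_rpow zero_le_two hb.le, rpow_add_one hb.ne']
    ring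
  calc (1 + mu ^ 2) ^ (-β) * exp (-mu * t) ≤ (1 + a ^ 2) ^ (-β) :=
        one_add_sq_rpow_mul_exp_neg_mul_le hb hmu.le ht
    _ = exp (log (1 + a ^ 2) * -β) := rpow_def_of_pos (by positivity) _
    _ ≤ exp (((2 + Θ) / Θ * a ^ Θ + 1) * -β) := by gcongr
    _ = exp (2 ^ Θ * (-β) ^ (Θ + 1) * ((2 + Θ) / Θ) / t ^ Θ - β) := by
        rw [add_mul, mul_assoc, haΘ]; ring_nf
end

section
/- Let H₁, H₂, H₃ be Hilbert spaces and X: H₁ → H₃, Y: H₂ → H₃ bounded linear operators. If there exists c > 0 such that ‖X* z‖ ≤ c ‖Y* z‖ for all z ∈ H₃, then the range of X is contained in the range of Y. -/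
/-! For `x ∈ H₁`, the functional `z ↦ ⟪X x, z⟫ = ⟪x, X* z⟫` is bounded by `c ‖x‖ ‖Y* z‖`.
A functional dominated in this way vanishes on `ker Y*`, so it factors through the range of
`Y*` as a bounded functional; Hahn–Banach extends it to all of `H₂`, and its Riesz
representative `w` satisfies `⟪Y w, z⟫ = ⟪w, Y* z⟫ = ⟪X x, z⟫` for all `z`, i.e. `Y w = X x`. -/

open scoped InnerProductSpace

namespace LinearMap

variable {R M N P : Type*} [Ring R] [AddCommGroup M] [AddCommGroup N] [AddCommGroup P]
  [Module R M] [Module R N] [Module R P]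

theorem exists_comp_rangeRestrict_eq {f : M →ₗ[R] N} {g : M →ₗ[R] P} (h : ker f ≤ ker g) :
    ∃ g' : range f →ₗ[R] P, g' ∘ₗ f.rangeRestrict = g :=
  ⟨(ker f).liftQ g h ∘ₗ f.quotKerEquivRange.symm.toLinearMap, by
    ext z
    have : f.rangeRestrict z = f.quotKerEquivRange (Submodule.Quotient.mk z) :=
      Subtype.ext (quotKerEquivRange_apply_mk f z).symm
    simp [this]⟩

end LinearMap

namespace ContinuousLinearMap

theorem exists_comp_eq_of_norm_le {𝕜 E F : Type*} [RCLike 𝕜]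
    [NormedAddCommGroup E] [NormedSpace 𝕜 E] [NormedAddCommGroup F] [NormedSpace 𝕜 F]
    (T : E →L[𝕜] F) (φ : StrongDual 𝕜 E) (C : ℝ) (h : ∀ z, ‖φ z‖ ≤ C * ‖T z‖) :
    ∃ g : StrongDual 𝕜 F, g ∘L T = φ := by
  have hker : LinearMap.ker (T : E →ₗ[𝕜] F) ≤ LinearMap.ker (φ : E →ₗ[𝕜] 𝕜) := by
    intro z hz
    have := h z
    rw [show T z = 0 from hz, norm_zero, mul_zero] at this
    exact norm_le_zero_iff.mp this
  obtain ⟨φ₀, hφ₀⟩ := LinearMap.exists_comp_rangeRestrict_eq hker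
  have hφ₀_apply (z : E) : φ₀ ((T : E →ₗ[𝕜] F).rangeRestrict z) = φ z :=
    LinearMap.congr_fun hφ₀ z
  have hbound (u : LinearMap.range (T : E →ₗ[𝕜] F)) : ‖φ₀ u‖ ≤ C * ‖u‖ := by
    obtain ⟨_, z, rfl⟩ := u
    exact (congrArg norm (hφ₀_apply z)).trans_le (h z)
  obtain ⟨g, hg, -⟩ := exists_extension_norm_eq _ (φ₀.mkContinuous C hbound)
  exact ⟨g, ext fun z => (hg _).trans (hφ₀_apply z)⟩

variable {𝕜 H K : Type*} [RCLike 𝕜]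
  [NormedAddCommGroup H] [InnerProductSpace 𝕜 H] [CompleteSpace H]
  [NormedAddCommGroup K] [InnerProductSpace 𝕜 K] [CompleteSpace K]

theorem mem_range_of_norm_inner_le (Y : H →L[𝕜] K) (v : K) (C : ℝ)
    (h : ∀ z, ‖⟪v, z⟫_𝕜‖ ≤ C * ‖adjoint Y z‖) : v ∈ Set.range Y := by
  obtain ⟨g, hg⟩ := (adjoint Y).exists_comp_eq_of_norm_le (innerSL 𝕜 v) C h
  refine ⟨(InnerProductSpace.toDual 𝕜 H).symm g, ext_inner_right 𝕜 fun z => ?_⟩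
  rw [← adjoint_inner_right, InnerProductSpace.toDual_symm_apply]
  exact congr($hg z)

end ContinuousLinearMap

theorem stmt_12 {H₁ H₂ H₃ : Type*}
    [NormedAddCommGroup H₁] [InnerProductSpace ℝ H₁] [CompleteSpace H₁]
    [NormedAddCommGroup H₂] [InnerProductSpace ℝ H₂] [CompleteSpace H₂]
    [NormedAddCommGroup H₃] [InnerProductSpace ℝ H₃] [CompleteSpace H₃]
    (Xop : H₁ →L[ℝ] H₃) (Yop : H₂ →L[ℝ] H₃)
    (h : ∃ c > (0 : ℝ), ∀ z : H₃, ‖Xop.adjoint z‖ ≤ c * ‖Yop.adjoint z‖) :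
    Set.range Xop ⊆ Set.range Yop := by
  obtain ⟨c, -, hc⟩ := h
  rintro _ ⟨x, rfl⟩
  refine Yop.mem_range_of_norm_inner_le _ (c * ‖x‖) fun z => ?_
  calc ‖⟪Xop x, z⟫_ℝ‖ = ‖⟪x, Xop.adjoint z⟫_ℝ‖ := by rw [Xop.adjoint_inner_right]
    _ ≤ ‖x‖ * ‖Xop.adjoint z‖ := norm_inner_le_norm _ _
    _ ≤ ‖x‖ * (c * ‖Yop.adjoint z‖) := by gcongr; exact hc z
    _ = c * ‖x‖ * ‖Yop.adjoint z‖ := by ring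
end

section
/- Let A be a self-adjoint operator bounded below on a Hilbert space X with κ = min σ(A) < 0, let T > 0, and let B: U → X be bounded with operator norm ‖B‖. If the control system ẇ + Aw = Bu is null-controllable in time T with control cost C_T, then C_T² ≥ ‖B‖^{−2} · 2κ / (e^{2κT} − 1), and in particular C_T² ≥ ‖B‖^{−2} · (1/(2T) − κ). -/
/-!
Test the observability inequality on a `φ ≠ 0` whose spectral measure lives in `[κ, κ + ε]`.
Then `‖S T φ‖² ≥ e^{-2(κ+ε)T} ‖φ‖²`, while `‖B* S t φ‖² ≤ ‖B‖² e^{-2κt} ‖φ‖²`, so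
`e^{-2(κ+ε)T} ≤ C_T² ‖B‖² ∫₀ᵀ e^{-2κt} dt`. Letting `ε → 0` and evaluating the integral gives the
first bound; the second follows from `x / (eˣ - 1) ≥ (1 - x) / 2` for `x < 0`.
-/

open MeasureTheory Real Set Filter Topology

theorem integral_exp_mul {a b c : ℝ} (hc : c ≠ 0) :
    ∫ x in a..b, exp (c * x) = (exp (c * b) - exp (c * a)) / c := by
  rw [intervalIntegral.integral_comp_mul_left (fun x => exp x) hc, integral_exp, smul_eq_mul,
    inv_mul_eq_div]

theorem one_sub_div_two_le_div_exp_sub_one {x : ℝ} (hx : x < 0) :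
    (1 - x) / 2 ≤ x / (exp x - 1) := by
  have hE : exp x - 1 < 0 := by linarith [exp_lt_one_iff.mpr hx]
  rw [le_div_iff_of_neg hE]
  rcases le_or_gt (-1) x with h | h <;> nlinarith [add_one_le_exp x, exp_pos x]

theorem intervalIntegral.integral_mono_on_of_nonneg {f g : ℝ → ℝ} {a b : ℝ} (hab : a ≤ b)
    (hg : IntervalIntegrable g volume a b) (hf : ∀ x ∈ Icc a b, 0 ≤ f x)
    (hfg : ∀ x ∈ Icc a b, f x ≤ g x) : ∫ x in a..b, f x ≤ ∫ x in a..b, g x := by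
  by_cases hfi : IntervalIntegrable f volume a b
  · exact intervalIntegral.integral_mono_on hab hfi hg hfg
  · rw [intervalIntegral.integral_undef hfi]
    exact intervalIntegral.integral_nonneg hab fun x hx => (hf x hx).trans (hfg x hx)

theorem intervalIntegral_norm_adjoint_apply_sq_le {X U : Type*}
    [NormedAddCommGroup X] [InnerProductSpace ℝ X] [CompleteSpace X]
    [NormedAddCommGroup U] [InnerProductSpace ℝ U] [CompleteSpace U]
    (B : U →L[ℝ] X) {u : ℝ → X} {g : ℝ → ℝ} {a b : ℝ} (hab : a ≤ b)
    (hg : IntervalIntegrable g volume a b) (hug : ∀ t ∈ Icc a b, ‖u t‖ ^ 2 ≤ g t) :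
    ∫ t in a..b, ‖B.adjoint (u t)‖ ^ 2 ≤ ‖B‖ ^ 2 * ∫ t in a..b, g t := by
  rw [← intervalIntegral.integral_const_mul]
  refine intervalIntegral.integral_mono_on_of_nonneg hab (hg.const_mul _)
    (fun _ _ => by positivity) fun t ht => ?_
  calc ‖B.adjoint (u t)‖ ^ 2 ≤ (‖B‖ * ‖u t‖) ^ 2 := by
        gcongr
        simpa using (B.adjoint).le_opNorm (u t)
    _ ≤ ‖B‖ ^ 2 * g t := by rw [mul_pow]; gcongr; exact hug t ht

section SpectralMeasure

variable {ν : Measure ℝ} [IsFiniteMeasure ν] {a b t : ℝ}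

theorem integrable_exp_neg_two_mul (ht : 0 ≤ t) (ha : ∀ᵐ l ∂ν, a ≤ l) :
    Integrable (fun l => exp (-2 * l * t)) ν := by
  refine (integrable_const (exp (-2 * a * t))).mono' (by fun_prop) ?_
  filter_upwards [ha] with l hl
  rw [norm_of_nonneg (exp_pos _).le, exp_le_exp]
  nlinarith

theorem integral_exp_neg_two_mul_le (ht : 0 ≤ t) (ha : ∀ᵐ l ∂ν, a ≤ l) :
    ∫ l, exp (-2 * l * t) ∂ν ≤ exp (-2 * a * t) * ν.real univ := by
  rw [mul_comm, ← smul_eq_mul, ← integral_const]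
  refine integral_mono_ae (integrable_exp_neg_two_mul ht ha) (integrable_const _) ?_
  filter_upwards [ha] with l hl
  rw [exp_le_exp]
  nlinarith

theorem exp_neg_two_mul_le_integral (ht : 0 ≤ t) (ha : ∀ᵐ l ∂ν, a ≤ l)
    (hb : ∀ᵐ l ∂ν, l ≤ b) :
    exp (-2 * b * t) * ν.real univ ≤ ∫ l, exp (-2 * l * t) ∂ν := by
  rw [mul_comm, ← smul_eq_mul, ← integral_const]
  refine integral_mono_ae (integrable_const _) (integrable_exp_neg_two_mul ht ha) ?_
  filter_upwards [hb] with l hl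
  rw [exp_le_exp]
  nlinarith

end SpectralMeasure

theorem div_exp_sub_one_le_of_exp_le_mul_integral {κ T K : ℝ} (hκ : κ < 0) (hT : 0 < T)
    (h : exp (-2 * κ * T) ≤ K * ∫ t in (0 : ℝ)..T, exp (-2 * κ * t)) :
    2 * κ / (exp (2 * κ * T) - 1) ≤ K := by
  rw [integral_exp_mul (by linarith), mul_zero, exp_zero] at h
  have hE : exp (-2 * κ * T) * exp (2 * κ * T) = 1 := by rw [← exp_add]; simp
  have hE1 : exp (2 * κ * T) < 1 := exp_lt_one_iff.mpr (by nlinarith)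
  rw [← mul_div_assoc, le_div_iff₀ (by linarith)] at h
  have h' := mul_le_mul_of_nonneg_right h (exp_pos (2 * κ * T)).le
  rw [div_le_iff_of_neg (by linarith)]
  linear_combination h' + (2 * κ + K) * hE

section Observability

variable {X U : Type*}
    [NormedAddCommGroup X] [InnerProductSpace ℝ X] [CompleteSpace X]
    [NormedAddCommGroup U] [InnerProductSpace ℝ U] [CompleteSpace U]
    {κ b T CT : ℝ} {B : U →L[ℝ] X} {S : ℝ → X →L[ℝ] X} {φ : X}
    {ν : Measure ℝ} [IsFiniteMeasure ν]

theorem exp_neg_two_mul_le_of_observability (hT : 0 ≤ T) (hφ : φ ≠ 0)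
    (hnorm : ‖φ‖ ^ 2 = (ν univ).toReal)
    (hheat : ∀ t : ℝ, ‖S t φ‖ ^ 2 = ∫ l, exp (-2 * l * t) ∂ν)
    (hlow : ∀ᵐ l ∂ν, κ ≤ l) (hup : ∀ᵐ l ∂ν, l ≤ b)
    (hobs : ‖S T φ‖ ^ 2 ≤ CT ^ 2 * ∫ t in (0 : ℝ)..T, ‖B.adjoint (S t φ)‖ ^ 2) :
    exp (-2 * b * T) ≤ CT ^ 2 * ‖B‖ ^ 2 * ∫ t in (0 : ℝ)..T, exp (-2 * κ * t) := by
  have hm : ν.real univ = ‖φ‖ ^ 2 := hnorm.symm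
  have hS : ∀ t ∈ Icc 0 T, ‖S t φ‖ ^ 2 ≤ exp (-2 * κ * t) * ‖φ‖ ^ 2 := fun t ht => by
    rw [hheat, ← hm]
    exact integral_exp_neg_two_mul_le ht.1 hlow
  have hadj := intervalIntegral_norm_adjoint_apply_sq_le B hT
    (Continuous.intervalIntegrable (by fun_prop) _ _) hS
  rw [intervalIntegral.integral_mul_const] at hadj
  refine le_of_mul_le_mul_right ?_ (pow_pos (norm_pos_iff.mpr hφ) 2)
  calc exp (-2 * b * T) * ‖φ‖ ^ 2 ≤ ‖S T φ‖ ^ 2 := by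
        rw [hheat, ← hm]
        exact exp_neg_two_mul_le_integral hT hlow hup
    _ ≤ CT ^ 2 * ∫ t in (0 : ℝ)..T, ‖B.adjoint (S t φ)‖ ^ 2 := hobs
    _ ≤ CT ^ 2 * (‖B‖ ^ 2 * ((∫ t in (0 : ℝ)..T, exp (-2 * κ * t)) * ‖φ‖ ^ 2)) := by gcongr
    _ = CT ^ 2 * ‖B‖ ^ 2 * (∫ t in (0 : ℝ)..T, exp (-2 * κ * t)) * ‖φ‖ ^ 2 := by ring

end Observability

theorem stmt_15_general {X U : Type*}
    [NormedAddCommGroup X] [InnerProductSpace ℝ X] [CompleteSpace X]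
    [NormedAddCommGroup U] [InnerProductSpace ℝ U] [CompleteSpace U]
    (κ T CT : ℝ) (hκ : κ < 0) (hT : 0 < T)
    (B : U →L[ℝ] X)
    (S : ℝ → X →L[ℝ] X)
    (μ : X → Measure ℝ)
    (hfin : ∀ φ : X, IsFiniteMeasure (μ φ))
    (hnorm : ∀ φ : X, ‖φ‖ ^ 2 = ((μ φ) Set.univ).toReal)
    (hheat : ∀ φ : X, ∀ t : ℝ, ‖S t φ‖ ^ 2 = ∫ l, Real.exp (-2 * l * t) ∂(μ φ))
    (hlow : ∀ φ : X, ∀ᵐ l ∂(μ φ), κ ≤ l)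
    (hmin : ∀ ε > (0 : ℝ), ∃ φ : X, φ ≠ 0 ∧ ∀ᵐ l ∂(μ φ), l ≤ κ + ε)
    (hobs : ∀ φ : X, ‖S T φ‖ ^ 2 ≤ CT ^ 2 * ∫ t in (0 : ℝ)..T, ‖B.adjoint (S t φ)‖ ^ 2) :
    CT ^ 2 ≥ ‖B‖⁻¹ ^ 2 * (2 * κ / (Real.exp (2 * κ * T) - 1)) ∧
    CT ^ 2 ≥ ‖B‖⁻¹ ^ 2 * (1 / (2 * T) - κ) := by
  have hε : ∀ ε > (0 : ℝ),
      exp (-2 * (κ + ε) * T) ≤ CT ^ 2 * ‖B‖ ^ 2 * ∫ t in (0 : ℝ)..T, exp (-2 * κ * t) := by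
    intro ε hε
    obtain ⟨φ, hφ, hb⟩ := hmin ε hε
    exact exp_neg_two_mul_le_of_observability hT.le hφ (hnorm φ) (hheat φ) (hlow φ) hb (hobs φ)
  have hlim : Tendsto (fun ε => exp (-2 * (κ + ε) * T)) (𝓝[>] 0) (𝓝 (exp (-2 * κ * T))) := by
    have := ((by fun_prop : Continuous fun ε => exp (-2 * (κ + ε) * T)).tendsto 0)
    simpa using this.mono_left nhdsWithin_le_nhds
  have hcost := div_exp_sub_one_le_of_exp_le_mul_integral hκ hT
    (le_of_tendsto hlim (eventually_nhdsWithin_of_forall hε))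
  have hq : 0 < 2 * κ / (exp (2 * κ * T) - 1) := by
    have : exp (2 * κ * T) < 1 := exp_lt_one_iff.mpr (by nlinarith)
    exact div_pos_of_neg_of_neg (by linarith) (by linarith)
  have hB : 0 < ‖B‖ ^ 2 := by
    refine (sq_nonneg _).lt_of_ne fun hB => ?_
    rw [← hB, mul_zero] at hcost
    linarith
  have hfirst : ‖B‖⁻¹ ^ 2 * (2 * κ / (exp (2 * κ * T) - 1)) ≤ CT ^ 2 := by
    rw [inv_pow, inv_mul_le_iff₀ hB]
    exact hcost.trans_eq (mul_comm _ _)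
  refine ⟨hfirst, le_trans ?_ hfirst⟩
  gcongr
  have hx := one_sub_div_two_le_div_exp_sub_one (by nlinarith : 2 * κ * T < 0)
  calc 1 / (2 * T) - κ = (1 - 2 * κ * T) / 2 / T := by field_simp
    _ ≤ 2 * κ * T / (exp (2 * κ * T) - 1) / T := by gcongr
    _ = 2 * κ / (exp (2 * κ * T) - 1) := by rw [div_right_comm, mul_div_cancel_right₀ _ hT.ne']

theorem stmt_15 {X U : Type*}
    [NormedAddCommGroup X] [InnerProductSpace ℝ X] [CompleteSpace X]
    [NormedAddCommGroup U] [InnerProductSpace ℝ U] [CompleteSpace U]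
    (κ T CT : ℝ) (hκ : κ < 0) (hT : 0 < T) (hCT : 0 ≤ CT)
    (B : U →L[ℝ] X)
    (S : ℝ → X →L[ℝ] X)
    (μ : X → Measure ℝ)
    (hfin : ∀ φ : X, IsFiniteMeasure (μ φ))
    (hnorm : ∀ φ : X, ‖φ‖ ^ 2 = ((μ φ) Set.univ).toReal)
    (hheat : ∀ φ : X, ∀ t : ℝ, ‖S t φ‖ ^ 2 = ∫ l, Real.exp (-2 * l * t) ∂(μ φ))
    (hlow : ∀ φ : X, ∀ᵐ l ∂(μ φ), κ ≤ l)
    (hmin : ∀ ε > (0 : ℝ), ∃ φ : X, φ ≠ 0 ∧ ∀ᵐ l ∂(μ φ), l ≤ κ + ε)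
    (hobs : ∀ φ : X, ‖S T φ‖ ^ 2 ≤ CT ^ 2 * ∫ t in (0 : ℝ)..T, ‖B.adjoint (S t φ)‖ ^ 2) :
    CT ^ 2 ≥ ‖B‖⁻¹ ^ 2 * (2 * κ / (Real.exp (2 * κ * T) - 1)) ∧
    CT ^ 2 ≥ ‖B‖⁻¹ ^ 2 * (1 / (2 * T) - κ) :=
  stmt_15_general κ T CT hκ hT B S μ hfin hnorm hheat hlow hmin hobs
end

section
/- Let A be a self-adjoint operator on a Hilbert space X with κ = min σ(A), T > 0, and w₀ ∈ X. The control u₂(t) = ∫_{[κ,∞)} e^{λt} g_T(λ) dP_A(λ) w₀, with g_T(λ) = −1/T for λ = 0 and g_T(λ) = −2λ/(e^{2λT} − 1) for λ ≠ 0, is a null-control in time T for ẇ + Aw = u, and ‖u₂‖²_{L²([0,T],X)} ≤ ‖w₀‖² · (1/T if κ = 0, and 2κ/(e^{2κT} − 1) if κ ≠ 0). -/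
/-!
Spectrally, the system splits into the scalar modes `ẇ + λ w = u`. For the mode `λ` put
`G(λ) = ∫₀ᵀ e^{2λs} ds`; then `g_T(λ) = -1 / G(λ)`, so the control `e^{λs} g_T(λ)` cancels
`e^{-λT}` exactly and has energy `G(λ)⁻¹` on `[0, T]`. As `G` is increasing, every mode with
`λ ≥ κ` has energy at most `G(κ)⁻¹`; integrating over the spectral measure of `w₀` (of mass
`‖w₀‖²`) after exchanging the order of integration gives the bound.
-/

open MeasureTheory Set Function

noncomputable def modeGramian (l T : ℝ) : ℝ := ∫ s in (0 : ℝ)..T, Real.exp (2 * l * s)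

theorem modeGramian_zero (T : ℝ) : modeGramian 0 T = T := by
  simp [modeGramian]

theorem modeGramian_of_ne_zero {l : ℝ} (hl : l ≠ 0) (T : ℝ) :
    modeGramian l T = (Real.exp (2 * l * T) - 1) / (2 * l) := by
  rw [modeGramian, intervalIntegral.integral_comp_mul_left (fun x => Real.exp x)
    (mul_ne_zero two_ne_zero hl), integral_exp, mul_zero, Real.exp_zero, smul_eq_mul,
    inv_mul_eq_div]

theorem modeGramian_pos (l : ℝ) {T : ℝ} (hT : 0 < T) : 0 < modeGramian l T :=
  intervalIntegral.intervalIntegral_pos_of_pos_on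
    ((by fun_prop : Continuous _).intervalIntegrable _ _) (fun _ _ => Real.exp_pos _) hT

theorem modeGramian_mono {T : ℝ} (hT : 0 ≤ T) : Monotone (modeGramian · T) := fun _ _ hkl =>
  intervalIntegral.integral_mono_on hT ((by fun_prop : Continuous _).intervalIntegrable _ _)
    ((by fun_prop : Continuous _).intervalIntegrable _ _) fun _ hs =>
      Real.exp_le_exp.2 (by nlinarith [hs.1])

theorem eq_neg_inv_modeGramian {T : ℝ} {g : ℝ → ℝ} (hg₀ : g 0 = -(1 / T))
    (hg : ∀ l : ℝ, l ≠ 0 → g l = -(2 * l) / (Real.exp (2 * l * T) - 1)) :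
    g = fun l => -(modeGramian l T)⁻¹ := by
  funext l
  rcases eq_or_ne l 0 with rfl | hl
  · rw [hg₀, modeGramian_zero, one_div]
  · rw [hg l hl, modeGramian_of_ne_zero hl, inv_div, neg_div]

theorem integral_sq_exp_mul (l T g : ℝ) :
    ∫ t in (0 : ℝ)..T, (Real.exp (l * t) * g) ^ 2 = g ^ 2 * modeGramian l T := by
  rw [modeGramian, ← intervalIntegral.integral_const_mul]
  congr 1 with t
  rw [mul_pow, ← Real.exp_nat_mul]
  ring_nf

theorem integral_sq_exp_mul_neg_inv_modeGramian (l : ℝ) {T : ℝ} (hT : 0 < T) :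
    ∫ t in (0 : ℝ)..T, (Real.exp (l * t) * -(modeGramian l T)⁻¹) ^ 2 = (modeGramian l T)⁻¹ := by
  have := (modeGramian_pos l hT).ne'
  rw [integral_sq_exp_mul]
  field_simp

theorem exp_add_integral_exp_mul (l T g : ℝ) :
    Real.exp (-(l * T)) +
        ∫ s in (0 : ℝ)..T, Real.exp (-(l * (T - s))) * (Real.exp (l * s) * g) =
      Real.exp (-(l * T)) * (1 + g * modeGramian l T) := by
  have h : ∀ s, Real.exp (-(l * (T - s))) * (Real.exp (l * s) * g) =
      Real.exp (-(l * T)) * g * Real.exp (2 * l * s) := fun s => by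
    rw [mul_left_comm, ← mul_assoc, ← Real.exp_add, mul_right_comm, ← Real.exp_add]
    ring_nf
  simp_rw [h, intervalIntegral.integral_const_mul, modeGramian]
  ring

theorem intervalIntegral_integral_le_of_ae_le {α : Type*} [MeasurableSpace α] {μ : Measure α}
    [IsFiniteMeasure μ] {a b : ℝ} (hab : a ≤ b) {f : ℝ → α → ℝ}
    (hf : StronglyMeasurable (uncurry f)) (hf₀ : ∀ t l, 0 ≤ f t l)
    (hfi : ∀ l, IntervalIntegrable (f · l) volume a b) {C : ℝ}
    (hC : ∀ᵐ l ∂μ, ∫ t in a..b, f t l ≤ C) :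
    ∫ t in a..b, ∫ l, f t l ∂μ ≤ C * μ.real univ := by
  simp only [intervalIntegral.integral_of_le hab] at hC ⊢
  have hbound : ∀ᵐ l ∂μ, ‖∫ t in Ioc a b, ‖f t l‖‖ ≤ C := by
    filter_upwards [hC] with l hl
    simp_rw [Real.norm_eq_abs, abs_of_nonneg (hf₀ _ _)]
    rwa [abs_of_nonneg (setIntegral_nonneg measurableSet_Ioc fun t _ => hf₀ t l)]
  have hint : Integrable (uncurry f) ((volume.restrict (Ioc a b)).prod μ) :=
    (integrable_prod_iff' hf.aestronglyMeasurable).2 ⟨ae_of_all _ fun l => (hfi l).1,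
      (integrable_const C).mono' hf.norm.integral_prod_left'.aestronglyMeasurable hbound⟩
  calc ∫ t in Ioc a b, ∫ l, f t l ∂μ = ∫ l, (∫ t in Ioc a b, f t l) ∂μ :=
        integral_integral_swap hint
    _ ≤ ∫ _, C ∂μ := integral_mono_ae hint.integral_prod_right (integrable_const C) hC
    _ = C * μ.real univ := by rw [integral_const, smul_eq_mul, mul_comm]

/- `μ` stands for the spectral measure `⟨P_A(·) w₀, w₀⟩`: the conclusions are the spectral forms
of `w(T) = 0`, mode by mode, and of the bound on `‖u₂‖²_{L²([0,T],X)}`. -/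
theorem stmt_17_general {X : Type*} [NormedAddCommGroup X]
    (κ T : ℝ) (hT : 0 < T)
    (w₀ : X) (μ : Measure ℝ) (hfin : IsFiniteMeasure μ)
    (hnorm : ‖w₀‖ ^ 2 = (μ Set.univ).toReal)
    (hspec : ∀ᵐ l ∂μ, κ ≤ l)
    (gT : ℝ → ℝ) (hg0 : gT 0 = -(1 / T))
    (hg : ∀ l : ℝ, l ≠ 0 → gT l = -(2 * l) / (Real.exp (2 * l * T) - 1)) :
    (∀ l : ℝ, κ ≤ l →
      Real.exp (-(l * T)) +
        (∫ s in (0 : ℝ)..T, Real.exp (-(l * (T - s))) * (Real.exp (l * s) * gT l)) = 0) ∧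
    (κ = 0 →
      (∫ t in (0 : ℝ)..T, ∫ l, (Real.exp (l * t) * gT l) ^ 2 ∂μ) ≤ ‖w₀‖ ^ 2 * (1 / T)) ∧
    (κ ≠ 0 →
      (∫ t in (0 : ℝ)..T, ∫ l, (Real.exp (l * t) * gT l) ^ 2 ∂μ) ≤
        ‖w₀‖ ^ 2 * (2 * κ / (Real.exp (2 * κ * T) - 1))) := by
  obtain rfl := eq_neg_inv_modeGramian hg0 hg
  have hG_meas := (modeGramian_mono hT.le).measurable
  have hbound : ∫ t in (0 : ℝ)..T, ∫ l, (Real.exp (l * t) * -(modeGramian l T)⁻¹) ^ 2 ∂μ ≤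
      ‖w₀‖ ^ 2 * (modeGramian κ T)⁻¹ := by
    rw [hnorm, mul_comm]
    refine intervalIntegral_integral_le_of_ae_le hT.le
      (Measurable.stronglyMeasurable (by fun_prop)) (fun _ _ => sq_nonneg _)
      (fun _ => (by fun_prop : Continuous _).intervalIntegrable _ _) ?_
    filter_upwards [hspec] with l hl
    rw [integral_sq_exp_mul_neg_inv_modeGramian l hT]
    exact inv_anti₀ (modeGramian_pos κ hT) (modeGramian_mono hT.le hl)
  refine ⟨fun l _ => ?_, fun hκ => ?_, fun hκ => ?_⟩
  · rw [exp_add_integral_exp_mul, neg_mul, inv_mul_cancel₀ (modeGramian_pos l hT).ne',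
      add_neg_cancel, mul_zero]
  · rwa [hκ, modeGramian_zero, ← one_div] at hbound
  · rwa [modeGramian_of_ne_zero hκ, inv_div] at hbound

theorem stmt_17 {X : Type*} [NormedAddCommGroup X] [InnerProductSpace ℝ X]
    (κ T : ℝ) (hT : 0 < T)
    (w₀ : X) (μ : Measure ℝ) (hfin : IsFiniteMeasure μ)
    (hnorm : ‖w₀‖ ^ 2 = (μ Set.univ).toReal)
    (hspec : ∀ᵐ l ∂μ, κ ≤ l)
    (gT : ℝ → ℝ) (hg0 : gT 0 = -(1 / T))
    (hg : ∀ l : ℝ, l ≠ 0 → gT l = -(2 * l) / (Real.exp (2 * l * T) - 1)) :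
    (∀ l : ℝ, κ ≤ l →
      Real.exp (-(l * T)) +
        (∫ s in (0 : ℝ)..T, Real.exp (-(l * (T - s))) * (Real.exp (l * s) * gT l)) = 0) ∧
    (κ = 0 →
      (∫ t in (0 : ℝ)..T, ∫ l, (Real.exp (l * t) * gT l) ^ 2 ∂μ) ≤ ‖w₀‖ ^ 2 * (1 / T)) ∧
    (κ ≠ 0 →
      (∫ t in (0 : ℝ)..T, ∫ l, (Real.exp (l * t) * gT l) ^ 2 ∂μ) ≤
        ‖w₀‖ ^ 2 * (2 * κ / (Real.exp (2 * κ * T) - 1))) :=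
  stmt_17_general κ T hT w₀ μ hfin hnorm hspec gT hg0 hg
end
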